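/- arXiv:1808.06196 — 2 statements merged into one kernel-verified Lean document; each statement's English description precedes it below -/
import Mathlib

section
/- Let φ : ℕ → ℝ be any sequence, f(n) = e(φ(n)), and I ⊆ ℕ a finite set. Define λ_f(I) by |E_{supp(n)⊆I} f(n)| = exp(−λ_f(I)) and λ̄_f(I) = min(λ_f(I), 1). Then λ̄_f(I) is comparable, up to absolute multiplicative constants, to inf_{β∈ℝ} E_{supp(n)⊆I} ‖φ(n) − β‖², i.e., there exist absolute constants c, C > 0 with c · inf_β E ‖φ(n) − β‖² ≤ λ̄_f(I) ≤ C · inf_β E ‖φ(n) − β‖². -/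
open scoped ENNReal

/-- `restrictSet q n I` is `n|_I`: the integer obtained by replacing all base-`q` digits of `n`
at positions outside `I` by `0`. -/
noncomputable def restrictSet (q n : ℕ) (I : Set ℕ) : ℕ :=
  ∑ i ∈ Finset.range n, Set.indicator I (fun i => n / q ^ i % q * q ^ i) i

/-- The (finite) set of all `n ≥ 0` whose base-`q` expansion is supported on `I`,
i.e. `supp n ⊆ I`. -/
noncomputable def digitNums (q : ℕ) (I : Finset ℕ) : Finset ℕ :=
  (Finset.range (q ^ (I.sup id + 1))).filter (fun n => restrictSet q n ↑I = n)

/-- The average `E_{supp(n) ⊆ I} f(n)` over all `n` with base-`q` support contained in `I`. -/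
noncomputable def avgD (q : ℕ) (f : ℕ → ℂ) (I : Finset ℕ) : ℂ :=
  (∑ n ∈ digitNums q I, f n) / (digitNums q I).card

/-- The quantity `λ_f(I) ∈ [0, ∞]` defined by `|E_{supp(n) ⊆ I} f(n)| = exp (−λ_f(I))`. -/
noncomputable def lam (q : ℕ) (f : ℕ → ℂ) (I : Finset ℕ) : ℝ≥0∞ :=
  if avgD q f I = 0 then ⊤ else ENNReal.ofReal (-Real.log ‖avgD q f I‖)

/-- `λ̄_f(I) = min (λ_f(I), 1)`. -/
noncomputable def lamBar (q : ℕ) (f : ℕ → ℂ) (I : Finset ℕ) : ℝ≥0∞ :=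
  min (lam q f I) 1



/-- Distance from a real number to the nearest integer (norm on `ℝ/ℤ`). -/
noncomputable def fpa (x : ℝ) : ℝ := ‖(x : AddCircle (1 : ℝ))‖



lemma fpa_eq (x : ℝ) : fpa x = |x - round x| := UnitAddCircle.norm_eq

lemma cos_round (x : ℝ) : Real.cos (2*Real.pi*(x - round x)) = Real.cos (2*Real.pi*x) := by
  have h : 2*Real.pi*(x - round x) = 2*Real.pi*x - (round x) * (2*Real.pi) := by ring
  rw [h, Real.cos_sub_int_mul_two_pi]

lemma one_sub_cos_le (x : ℝ) : 1 - Real.cos (2*Real.pi*x) ≤ 2*Real.pi^2 * fpa x ^ 2 := by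
  rw [← cos_round, fpa_eq]
  have := Real.one_sub_sq_div_two_le_cos (x := 2*Real.pi*(x - round x))
  have h2 : |x - round x| ^ 2 = (x - round x)^2 := sq_abs _
  nlinarith [Real.pi_pos]

lemma le_one_sub_cos (x : ℝ) : 8 * fpa x ^ 2 ≤ 1 - Real.cos (2*Real.pi*x) := by
  rw [← cos_round, fpa_eq]
  have hr : |x - round x| ≤ 1/2 := abs_sub_round x
  have hr0 : (0:ℝ) ≤ |x - round x| := abs_nonneg _
  have hx : |2*Real.pi*(x - round x)| ≤ Real.pi := by
    rw [abs_mul, abs_of_nonneg (by positivity : (0:ℝ) ≤ 2*Real.pi)]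
    nlinarith [Real.pi_pos]
  have := Real.cos_le_one_sub_mul_cos_sq hx
  have h2 : |x - round x| ^ 2 = (x - round x)^2 := sq_abs _
  have hpi : Real.pi > 0 := Real.pi_pos
  have h3 : 2 / Real.pi^2 * (2*Real.pi*(x - round x))^2 = 8*(x - round x)^2 := by
    field_simp; ring
  linarith [h3 ▸ this, h2]

lemma re_mul_exp (S : Finset ℕ) (φ : ℕ → ℝ) (β : ℝ) :
    ((∑ n ∈ S, Complex.exp (2*Real.pi*Complex.I*(φ n))) * Complex.exp (-(2*Real.pi*Complex.I*β))).re
      = ∑ n ∈ S, Real.cos (2*Real.pi*(φ n - β)) := by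
  rw [Finset.sum_mul, Complex.re_sum]
  refine Finset.sum_congr rfl fun n _ => ?_
  rw [← Complex.exp_add]
  have h : 2*(Real.pi:ℂ)*Complex.I*(φ n) + -(2*Real.pi*Complex.I*β)
      = ((2*Real.pi*(φ n - β) : ℝ) : ℂ) * Complex.I := by
    push_cast; ring
  rw [h, Complex.exp_ofReal_mul_I_re]

lemma g_le_abs (S : Finset ℕ) (φ : ℕ → ℝ) (β : ℝ) :
    ∑ n ∈ S, Real.cos (2*Real.pi*(φ n - β))
      ≤ ‖∑ n ∈ S, Complex.exp (2*Real.pi*Complex.I*(φ n))‖ := by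
  rw [← re_mul_exp S φ β]
  refine (Complex.re_le_norm _).trans ?_
  rw [norm_mul, Complex.norm_exp]
  simp

lemma exists_g_eq (S : Finset ℕ) (φ : ℕ → ℝ) :
    ∃ β : ℝ, ‖∑ n ∈ S, Complex.exp (2*Real.pi*Complex.I*(φ n))‖
      = ∑ n ∈ S, Real.cos (2*Real.pi*(φ n - β)) := by
  set T := ∑ n ∈ S, Complex.exp (2*Real.pi*Complex.I*(φ n)) with hTdef
  by_cases hT : T = 0
  · exact ⟨0, by rw [← re_mul_exp S φ 0, ← hTdef, hT]; simp⟩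
  · refine ⟨T.arg / (2*Real.pi), ?_⟩
    rw [← re_mul_exp S φ _, ← hTdef]
    have hπc : (Real.pi:ℂ) ≠ 0 := Complex.ofReal_ne_zero.2 Real.pi_ne_zero
    have h1 : (-(2*(Real.pi:ℂ)*Complex.I*((T.arg / (2*Real.pi) : ℝ) : ℂ)))
        = -(T.arg * Complex.I) := by
      push_cast
      field_simp
    rw [h1]
    have h2 : T * Complex.exp (-(T.arg * Complex.I)) = (‖T‖ : ℂ) := by
      conv_lhs => rw [← Complex.norm_mul_exp_arg_mul_I T]
      rw [mul_assoc, ← Complex.exp_add]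
      simp
    rw [h2, Complex.ofReal_re]

lemma digitNums_card_pos (q : ℕ) (hq : 2 ≤ q) (I : Finset ℕ) : 0 < (digitNums q I).card := by
  refine Finset.card_pos.2 ⟨0, Finset.mem_filter.2 ⟨Finset.mem_range.2 (pow_pos (by omega) _), ?_⟩⟩
  simp [restrictSet]

lemma lamBar_bounds (q : ℕ) (f : ℕ → ℂ) (I : Finset ℕ)
    (hr1 : ‖avgD q f I‖ ≤ 1) :
    1 - ‖avgD q f I‖ ≤ (lamBar q f I).toReal ∧
    (lamBar q f I).toReal ≤ Real.exp 1 * (1 - ‖avgD q f I‖) := by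
  by_cases hA : avgD q f I = 0
  · have h : lamBar q f I = 1 := by simp [lamBar, lam, hA]
    rw [h, hA]
    simp only [norm_zero, sub_zero, ENNReal.toReal_one]
    exact ⟨le_refl 1, by nlinarith [Real.exp_one_gt_d9]⟩
  · set r := ‖avgD q f I‖ with hrdef
    have hr0 : 0 < r := norm_pos_iff.2 hA
    have hlog : Real.log r ≤ 0 := Real.log_nonpos hr0.le hr1
    have hL : (lamBar q f I).toReal = min (-Real.log r) 1 := by
      rw [lamBar, lam, if_neg hA, ENNReal.toReal_min ENNReal.ofReal_ne_top (by simp),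
        ENNReal.toReal_ofReal (by linarith), ENNReal.toReal_one]
    rw [hL]
    constructor
    · refine le_min ?_ (by linarith)
      have := Real.add_one_le_exp (Real.log r)
      rw [Real.exp_log hr0] at this
      linarith
    · rcases le_or_gt (Real.exp (-1)) r with hc | hc
      · have h1 : -Real.log r = Real.log r⁻¹ := (Real.log_inv r).symm
        have h2 : Real.log r⁻¹ ≤ r⁻¹ - 1 := Real.log_le_sub_one_of_pos (by positivity)
        have h3 : r⁻¹ ≤ Real.exp 1 := by
          rw [Real.exp_neg] at hc
          calc r⁻¹ ≤ ((Real.exp 1)⁻¹)⁻¹ := by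
                exact inv_anti₀ (by positivity) hc
            _ = Real.exp 1 := inv_inv _
        have hinv : r * r⁻¹ = 1 := mul_inv_cancel₀ hr0.ne'
        refine (min_le_left _ _).trans ?_
        nlinarith
      · have hprod : Real.exp (-1) * Real.exp 1 = 1 := by
          rw [← Real.exp_add]; norm_num
        refine (min_le_right _ _).trans ?_
        nlinarith [Real.exp_one_gt_d9, Real.exp_pos 1]


/-- For `f(n) = e(φ(n))`, the quantity `λ̄_f(I)` is comparable, up to absolute multiplicative
constants, to `inf_β E_{supp(n) ⊆ I} ‖φ(n) − β‖²`. -/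
theorem stmt_9 :
    ∃ c C : ℝ, 0 < c ∧ 0 < C ∧
      ∀ q : ℕ, 2 ≤ q → ∀ φ : ℕ → ℝ, ∀ I : Finset ℕ,
        c * (⨅ β : ℝ, (∑ n ∈ digitNums q I, fpa (φ n - β) ^ 2) / (digitNums q I).card) ≤
            (lamBar q (fun n => Complex.exp (2 * Real.pi * Complex.I * (φ n))) I).toReal ∧
        (lamBar q (fun n => Complex.exp (2 * Real.pi * Complex.I * (φ n))) I).toReal ≤
            C * (⨅ β : ℝ, (∑ n ∈ digitNums q I, fpa (φ n - β) ^ 2) / (digitNums q I).card) := by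
  have hCpos : 0 < 2*Real.pi^2*Real.exp 1 := by positivity
  refine ⟨8, 2*Real.pi^2*Real.exp 1, by norm_num, hCpos, ?_⟩
  intro q hq φ I
  set f : ℕ → ℂ := fun n => Complex.exp (2 * Real.pi * Complex.I * (φ n)) with hf
  set S := digitNums q I with hS
  have hN : 0 < ((S.card : ℕ) : ℝ) := by
    exact_mod_cast digitNums_card_pos q hq I
  set N : ℝ := (S.card : ℝ) with hNdef
  set T := ∑ n ∈ S, Complex.exp (2*Real.pi*Complex.I*(φ n)) with hT
  have havg : avgD q f I = T / (S.card : ℂ) := rfl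
  set r := ‖avgD q f I‖ with hrdef
  have hrT : r = ‖T‖ / N := by
    rw [hrdef, havg, norm_div, RCLike.norm_natCast]
  have hTle : ‖T‖ ≤ N := by
    calc ‖T‖ ≤ ∑ n ∈ S, ‖Complex.exp (2*Real.pi*Complex.I*(φ n))‖ :=
          norm_sum_le _ _
      _ = ∑ n ∈ S, 1 := by
          refine Finset.sum_congr rfl fun n _ => ?_
          rw [Complex.norm_exp]
          simp
      _ = N := by simp [hNdef]
  have hr1 : r ≤ 1 := by
    rw [hrT]; exact (div_le_one hN).2 hTle
  obtain ⟨hlb, hub⟩ := lamBar_bounds q f I hr1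
  set m : ℝ → ℝ := fun β => (∑ n ∈ S, fpa (φ n - β) ^ 2) / N with hm
  have hm0 : ∀ β, 0 ≤ m β := fun β =>
    div_nonneg (Finset.sum_nonneg fun n _ => sq_nonneg _) hN.le
  have hBdd : BddBelow (Set.range m) := ⟨0, by rintro _ ⟨β, rfl⟩; exact hm0 β⟩
  have key1 : ∀ β, 1 - r ≤ 2*Real.pi^2 * m β := by
    intro β
    have h1 : ∑ n ∈ S, Real.cos (2*Real.pi*(φ n - β)) ≤ ‖T‖ := g_le_abs S φ β
    have h2 : ∑ n ∈ S, (1 - Real.cos (2*Real.pi*(φ n - β)))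
        ≤ ∑ n ∈ S, 2*Real.pi^2 * fpa (φ n - β)^2 :=
      Finset.sum_le_sum fun n _ => one_sub_cos_le _
    rw [Finset.sum_sub_distrib, Finset.sum_const, nsmul_eq_mul, mul_one, ← Finset.mul_sum] at h2
    have e1 : (1 - r) * N = N - ‖T‖ := by
      rw [hrT]; field_simp
    have e2 : 2*Real.pi^2 * m β = (2*Real.pi^2 * ∑ n ∈ S, fpa (φ n - β)^2) / N := by
      rw [hm]; ring
    rw [e2, le_div_iff₀ hN, e1]
    linarith
  obtain ⟨β₀, hβ₀⟩ := exists_g_eq S φ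
  have key2 : 8 * m β₀ ≤ 1 - r := by
    have h2 : ∑ n ∈ S, 8 * fpa (φ n - β₀)^2
        ≤ ∑ n ∈ S, (1 - Real.cos (2*Real.pi*(φ n - β₀))) :=
      Finset.sum_le_sum fun n _ => le_one_sub_cos _
    rw [Finset.sum_sub_distrib, Finset.sum_const, nsmul_eq_mul, mul_one, ← Finset.mul_sum] at h2
    have e1 : (1 - r) * N = N - ‖T‖ := by
      rw [hrT]; field_simp
    have e2 : 8 * m β₀ = (8 * ∑ n ∈ S, fpa (φ n - β₀)^2) / N := by
      rw [hm]; ring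
    rw [e2, div_le_iff₀ hN, e1]
    linarith [hβ₀ ▸ h2]
  constructor
  · have hinf : (⨅ β : ℝ, m β) ≤ m β₀ := ciInf_le hBdd β₀
    have : 8 * (⨅ β : ℝ, m β) ≤ 8 * m β₀ := by linarith
    calc 8 * (⨅ β : ℝ, m β) ≤ 8 * m β₀ := this
      _ ≤ 1 - r := key2
      _ ≤ _ := hlb
  · rw [mul_comm, ← div_le_iff₀ hCpos]
    refine le_ciInf fun β => ?_
    rw [div_le_iff₀ hCpos]
    have h1 : Real.exp 1 * (1 - r) ≤ Real.exp 1 * (2*Real.pi^2 * m β) :=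
      mul_le_mul_of_nonneg_left (key1 β) (Real.exp_pos 1).le
    calc (lamBar q f I).toReal ≤ Real.exp 1 * (1 - r) := hub
      _ ≤ Real.exp 1 * (2*Real.pi^2 * m β) := h1
      _ = m β * (2*Real.pi^2*Real.exp 1) := by ring
end

section
/- Let q ≥ 2, r ≥ 0, and f : ℕ → 𝕌 be q-quasimultiplicative with gap ≤ r. If there exists a sequence (I_i)_{i=1}^∞ of pairwise disjoint intervals in ℕ such that Σ_{i=1}^∞ λ̄_f(I_i) = ∞, then E_{n < q^L} f(n) → 0 as L → ∞. -/
open scoped ENNReal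

lemma sum_range_mul' {M : Type*} [AddCommMonoid M] (g : ℕ → M) (N K : ℕ) :
    ∑ n ∈ Finset.range (N*K), g n = ∑ t ∈ Finset.range N, ∑ u ∈ Finset.range K, g (t*K + u) := by
  induction N with
  | zero => simp
  | succ N ih =>
      have h1 : ∑ i ∈ Finset.Ico (N*K) (N*K + K), g i = ∑ u ∈ Finset.range K, g (N*K + u) := by
        rw [Finset.sum_Ico_eq_sum_range]; simp
      rw [Finset.sum_range_succ, ← ih, Nat.succ_mul, Finset.range_eq_Ico,
        ← Finset.sum_Ico_consecutive g (Nat.zero_le (N*K)) (Nat.le_add_right _ _), h1,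
        ← Finset.range_eq_Ico]

lemma digit_sum (q : ℕ) (n k : ℕ) :
    ∑ i ∈ Finset.range k, n / q^i % q * q^i = n % q^k := by
  induction k with
  | zero => simp [Nat.mod_one]
  | succ k ih =>
      rw [Finset.sum_range_succ, ih, pow_succ, Nat.mod_mul]
      ring

lemma restrict_Icc (q : ℕ) (hq : 2 ≤ q) (n a b : ℕ) (hab : a ≤ b) :
    restrictSet q n ↑(Finset.Icc a b) = n % q^(b+1) - n % q^a := by
  have hind : ∀ i, Set.indicator (↑(Finset.Icc a b) : Set ℕ) (fun i => n / q ^ i % q * q ^ i) i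
      = if a ≤ i ∧ i ≤ b then n / q^i % q * q^i else 0 := by
    intro i
    rw [Set.indicator_apply]
    simp [Finset.mem_Icc]
  have hK : Finset.range n ⊆ Finset.range (max n (b+1)) :=
    Finset.range_subset_range.mpr (le_max_left _ _)
  have hA : restrictSet q n ↑(Finset.Icc a b)
      = ∑ i ∈ Finset.range (max n (b+1)), if a ≤ i ∧ i ≤ b then n / q^i % q * q^i else 0 := by
    rw [restrictSet]
    rw [Finset.sum_congr rfl (fun i _ => hind i)]
    refine Finset.sum_subset hK (fun i hi hni => ?_)
    have hin : n ≤ i := by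
      simp only [Finset.mem_range, not_lt] at hni
      exact hni
    have : n < q ^ i := lt_of_lt_of_le (Nat.lt_pow_self (by omega))
      (Nat.pow_le_pow_right (by omega) hin)
    rw [Nat.div_eq_of_lt this]
    simp
  have hB : (Finset.range (max n (b+1))).filter (fun i => a ≤ i ∧ i ≤ b) = Finset.Ico a (b+1) := by
    ext i
    simp only [Finset.mem_filter, Finset.mem_range, Finset.mem_Ico]
    omega
  rw [hA, ← Finset.sum_filter, hB]
  have h1 := Finset.sum_Ico_consecutive (fun i => n / q^i % q * q^i)
    (Nat.zero_le a) (show a ≤ b+1 by omega)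
  rw [← Finset.range_eq_Ico, ← Finset.range_eq_Ico] at h1
  rw [digit_sum, digit_sum] at h1
  beta_reduce at h1
  omega

lemma sup_Icc (a b : ℕ) (hab : a ≤ b) : (Finset.Icc a b).sup id = b := by
  refine le_antisymm (Finset.sup_le (fun i hi => (Finset.mem_Icc.mp hi).2)) ?_
  exact Finset.le_sup (f := id) (Finset.mem_Icc.mpr ⟨hab, le_rfl⟩)

lemma digitNums_Icc (q : ℕ) (hq : 2 ≤ q) (a b : ℕ) (hab : a ≤ b) :
    digitNums q (Finset.Icc a b) = (Finset.range (q^(b+1-a))).image (fun v => v * q^a) := by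
  have hq0 : 0 < q := by omega
  ext n
  simp only [digitNums, Finset.mem_filter, Finset.mem_range, Finset.mem_image,
    sup_Icc a b hab]
  constructor
  · rintro ⟨hn, hres⟩
    rw [restrict_Icc q hq n a b hab, Nat.mod_eq_of_lt hn] at hres
    have hle := Nat.mod_le n (q^a)
    have hdvd : n % q^a = 0 := by omega
    refine ⟨n / q^a, ?_, ?_⟩
    · have : n / q^a * q^a = n := by
        rw [Nat.div_mul_cancel (Nat.dvd_of_mod_eq_zero hdvd)]
      have hlt : n / q^a * q^a < q^(b+1-a) * q^a := by
        rw [this, ← pow_add]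
        have : b+1-a+a = b+1 := by omega
        rw [this]; exact hn
      exact Nat.lt_of_mul_lt_mul_right hlt
    · rw [Nat.div_mul_cancel (Nat.dvd_of_mod_eq_zero hdvd)]
  · rintro ⟨v, hv, rfl⟩
    have hlt : v * q^a < q^(b+1) := by
      have : v * q^a < q^(b+1-a) * q^a := by
        exact (Nat.mul_lt_mul_right (Nat.pow_pos hq0)).mpr hv
      rw [← pow_add] at this
      have h2 : b+1-a+a = b+1 := by omega
      rwa [h2] at this
    refine ⟨hlt, ?_⟩
    rw [restrict_Icc q hq _ a b hab, Nat.mod_eq_of_lt hlt, Nat.mul_mod_left]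
    omega

lemma digitNums_Icc_card (q : ℕ) (hq : 2 ≤ q) (a b : ℕ) (hab : a ≤ b) :
    (digitNums q (Finset.Icc a b)).card = q^(b+1-a) := by
  rw [digitNums_Icc q hq a b hab, Finset.card_image_of_injective _
    (fun x y h => Nat.eq_of_mul_eq_mul_right (Nat.pow_pos (by omega)) h),
    Finset.card_range]

lemma digitNums_Icc_sum (q : ℕ) (hq : 2 ≤ q) (f : ℕ → ℂ) (a b : ℕ) (hab : a ≤ b) :
    ∑ n ∈ digitNums q (Finset.Icc a b), f n = ∑ v ∈ Finset.range (q^(b+1-a)), f (v * q^a) := by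
  rw [digitNums_Icc q hq a b hab, Finset.sum_image]
  intro x _ y _ h
  exact Nat.eq_of_mul_eq_mul_right (Nat.pow_pos (by omega)) h

lemma zero_mem_digitNums (q : ℕ) (hq : 2 ≤ q) (I : Finset ℕ) : 0 ∈ digitNums q I := by
  rw [digitNums, Finset.mem_filter, Finset.mem_range]
  constructor
  · exact Nat.pow_pos (by omega)
  · simp [restrictSet]

lemma abs_avgD_le_one (q : ℕ) (hq : 2 ≤ q) (f : ℕ → ℂ) (huni : ∀ n, ‖f n‖ = 1)
    (I : Finset ℕ) : ‖avgD q f I‖ ≤ 1 := by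
  have hpos : 0 < (digitNums q I).card := Finset.card_pos.mpr ⟨0, zero_mem_digitNums q hq I⟩
  rw [avgD, norm_div]
  have h1 : ‖∑ n ∈ digitNums q I, f n‖ ≤ (digitNums q I).card := by
    calc ‖∑ n ∈ digitNums q I, f n‖ ≤ ∑ n ∈ digitNums q I, ‖f n‖ :=
          norm_sum_le _ _
      _ = (digitNums q I).card := by simp [huni]
  have h2 : ‖((digitNums q I).card : ℂ)‖ = ((digitNums q I).card : ℝ) := by
    rw [Complex.norm_natCast]
  rw [h2, div_le_one (by exact_mod_cast hpos)]
  exact h1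

lemma abs_sum_interval (q : ℕ) (hq : 2 ≤ q) (f : ℕ → ℂ) (a b : ℕ) (hab : a ≤ b) :
    ‖∑ v ∈ Finset.range (q^(b+1-a)), f (v * q^a)‖
      = (q:ℝ)^(b+1-a) * ‖avgD q f (Finset.Icc a b)‖ := by
  have hcard : (((digitNums q (Finset.Icc a b)).card) : ℂ) = (q:ℂ)^(b+1-a) := by
    rw [digitNums_Icc_card q hq a b hab]; push_cast; ring
  have hne : ((q:ℂ))^(b+1-a) ≠ 0 := by
    apply pow_ne_zero; exact_mod_cast (by omega : q ≠ 0)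
  have hS : (∑ v ∈ Finset.range (q^(b+1-a)), f (v * q^a))
      = avgD q f (Finset.Icc a b) * (q:ℂ)^(b+1-a) := by
    rw [avgD, hcard, ← digitNums_Icc_sum q hq f a b hab]
    field_simp
  rw [hS, norm_mul, norm_pow, Complex.norm_natCast, mul_comm]

lemma one_sub_ahat_ge (q : ℕ) (hq : 2 ≤ q) (f : ℕ → ℂ) (huni : ∀ n, ‖f n‖ = 1)
    (I : Finset ℕ) :
    (1 - Real.exp (-1)) * (lamBar q f I).toReal ≤ 1 - ‖avgD q f I‖ := by
  set A := ‖avgD q f I‖ with hA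
  have hA0 : 0 ≤ A := norm_nonneg _
  have hA1 : A ≤ 1 := abs_avgD_le_one q hq f huni I
  have hc0 : 0 ≤ 1 - Real.exp (-1) := by
    have : Real.exp (-1) ≤ 1 := by
      rw [Real.exp_le_one_iff]; norm_num
    linarith
  by_cases h0 : avgD q f I = 0
  · have hlb : lamBar q f I = 1 := by
      unfold lamBar lam
      rw [if_pos h0]
      simp
    rw [hA, h0, norm_zero, hlb]
    simp
    exact (Real.exp_pos _).le
  · have hApos : 0 < A := by
      rw [hA]; exact norm_pos_iff.mpr h0
    unfold lamBar lam
    rw [if_neg h0]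
    have hne : ENNReal.ofReal (-Real.log A) ≠ ⊤ := ENNReal.ofReal_ne_top
    rw [ENNReal.toReal_min hne (by norm_num), ENNReal.toReal_ofReal', ENNReal.toReal_one]
    set t := min (max (-Real.log A) 0) 1 with ht
    have ht0 : 0 ≤ t := le_min (le_max_right _ _) zero_le_one
    have ht1 : t ≤ 1 := min_le_right _ _
    have hexp : Real.exp (-t) ≤ 1 - t + t * Real.exp (-1) := by
      have h := convexOn_exp.2 (Set.mem_univ 0) (Set.mem_univ (-1))
        (by linarith : (0:ℝ) ≤ 1 - t) ht0 (by ring)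
      simp only [smul_eq_mul, mul_zero, Real.exp_zero, mul_neg_one, mul_one] at h
      calc Real.exp (-t) = Real.exp ((1-t) * 0 + t * (-1)) := by ring_nf
        _ ≤ (1-t) * 1 + t * Real.exp (-1) := by simpa using h
        _ = 1 - t + t * Real.exp (-1) := by ring
    have hAe : A ≤ Real.exp (-t) := by
      by_cases hlog : -Real.log A ≤ 0
      · have : t = 0 := by rw [ht]; rw [max_eq_right hlog]; simp
        rw [this, neg_zero, Real.exp_zero]; exact hA1
      · push_neg at hlog
        have hmax : max (-Real.log A) 0 = -Real.log A := max_eq_left hlog.le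
        have htle : t ≤ -Real.log A := le_trans (min_le_left _ _) (le_of_eq hmax)
        have : -t ≥ Real.log A := by linarith
        calc A = Real.exp (Real.log A) := (Real.exp_log hApos).symm
          _ ≤ Real.exp (-t) := Real.exp_le_exp.mpr (by linarith)
    nlinarith [hexp, hAe, ht0, ht1]

lemma ML (q r : ℕ) (hq : 2 ≤ q) (f : ℕ → ℂ)
    (huni : ∀ n, ‖f n‖ = 1)
    (hqm : ∀ l n m : ℕ, m < q ^ l → q ^ (l + r) ∣ n → f (n + m) = f n * f m)
    (a b : ℕ → ℕ) :
    ∀ C : Finset ℕ, (∀ i ∈ C, r ≤ a i) → (∀ i ∈ C, a i ≤ b i) →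
    (∀ i ∈ C, ∀ j ∈ C, i ≠ j →
      Disjoint (Finset.Icc (a i) (b i + 2*r)) (Finset.Icc (a j) (b j + 2*r))) →
    ∀ S : ℕ, (∀ i ∈ C, b i + 1 + r ≤ S) → ∀ c : ℕ,
    ‖∑ v ∈ Finset.range (q^S), f (c * q^S + v)‖ ≤
      (q:ℝ)^S * ∏ i ∈ C,
        (1 - (1 - ‖avgD q f (Finset.Icc (a i) (b i))‖) / (q:ℝ)^(2*r)) := by
  have hq0 : 0 < q := by omega
  intro C
  induction C using Finset.strongInduction with
  | _ C IH =>
    intro hra hab hdisjC S hS c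
    rcases Finset.eq_empty_or_nonempty C with hC | hC
    · subst hC
      simp only [Finset.prod_empty, mul_one]
      calc ‖∑ v ∈ Finset.range (q^S), f (c * q^S + v)‖
          ≤ ∑ v ∈ Finset.range (q^S), ‖f (c * q^S + v)‖ := norm_sum_le _ _
        _ = (q:ℝ)^S := by
            simp only [huni, Finset.sum_const, Finset.card_range, nsmul_eq_mul, mul_one]
            push_cast; ring
    · obtain ⟨i₀, hi₀, hmax⟩ := Finset.exists_max_image C a hC
      set A := a i₀ with hA_def
      set Bb := b i₀ with hBb_def
      have hiA : r ≤ A := hra i₀ hi₀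
      have hiAB : A ≤ Bb := hab i₀ hi₀
      have hkey : ∀ j ∈ C.erase i₀, b j + 1 + 2*r ≤ A := by
        intro j hj
        have hjC := Finset.mem_of_mem_erase hj
        have hne := Finset.ne_of_mem_erase hj
        by_contra hcon
        push_neg at hcon
        have hd := hdisjC j hjC i₀ hi₀ hne
        have h1 : A ∈ Finset.Icc (a j) (b j + 2*r) :=
          Finset.mem_Icc.mpr ⟨hmax j hjC, by omega⟩
        have h2 : A ∈ Finset.Icc A (Bb + 2*r) :=
          Finset.mem_Icc.mpr ⟨le_rfl, by omega⟩
        exact (Finset.disjoint_left.mp hd) h1 h2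
      set m := Bb + 1 - A with hm_def
      set p := A - r with hp_def
      have hm : Bb + 1 = m + A := by omega
      have hp : A = p + r := by omega
      set B := Bb + 1 + r with hB_def
      have hBS : B ≤ S := hS i₀ hi₀
      set Ahat := ‖avgD q f (Finset.Icc A Bb)‖ with hAhat_def
      have hAhat0 : 0 ≤ Ahat := norm_nonneg _
      have hAhat1 : Ahat ≤ 1 := abs_avgD_le_one q hq f huni _
      set P' := ∏ i ∈ C.erase i₀,
        (1 - (1 - ‖avgD q f (Finset.Icc (a i) (b i))‖) / (q:ℝ)^(2*r)) with hP'_def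
      have hfac_nonneg : ∀ x : ℝ, 0 ≤ x → x ≤ 1 → 0 ≤ 1 - (1 - x) / (q:ℝ)^(2*r) := by
        intro x hx0 hx1
        have hq1 : (1:ℝ) ≤ (q:ℝ)^(2*r) := one_le_pow₀ (by exact_mod_cast hq0)
        have h2 : (1 - x) / (q:ℝ)^(2*r) ≤ 1 - x := by
          apply div_le_self (by linarith) hq1
        linarith
      have hP'0 : 0 ≤ P' := by
        apply Finset.prod_nonneg
        intro i _
        exact hfac_nonneg _ (norm_nonneg _) (abs_avgD_le_one q hq f huni _)
      set θ0 := 1 - (1 - Ahat) / (q:ℝ)^(2*r) with hθ0_def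
      have IH' : ∀ S' : ℕ, (∀ j ∈ C.erase i₀, b j + 1 + r ≤ S') → ∀ e : ℕ,
          ‖∑ v ∈ Finset.range (q^S'), f (e * q^S' + v)‖ ≤ (q:ℝ)^S' * P' := by
        intro S' hS' e
        exact IH (C.erase i₀) (Finset.erase_ssubset hi₀)
          (fun i hi => hra i (Finset.mem_of_mem_erase hi))
          (fun i hi => hab i (Finset.mem_of_mem_erase hi))
          (fun i hi j hj hij => hdisjC i (Finset.mem_of_mem_erase hi)
            j (Finset.mem_of_mem_erase hj) hij)
          S' hS' e
      have hIH_p : ∀ e : ℕ,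
          ‖∑ w ∈ Finset.range (q^p), f (e * q^p + w)‖ ≤ (q:ℝ)^p * P' := by
        intro e
        exact IH' p (fun j hj => by have := hkey j hj; omega) e
      have hIH_B1 : ∀ e : ℕ,
          ‖∑ y ∈ Finset.range (q^(Bb+1)), f (e * q^(Bb+1) + y)‖
            ≤ (q:ℝ)^(Bb+1) * P' := by
        intro e
        exact IH' (Bb+1) (fun j hj => by have := hkey j hj; omega) e
      have hW : ‖∑ w ∈ Finset.range (q^p), f w‖ ≤ (q:ℝ)^p * P' := by
        have := hIH_p 0
        simpa using this
      have hcnt : ((Finset.range (q^r)).erase 0).card = q^r - 1 := by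
        rw [Finset.card_erase_of_mem (Finset.mem_range.mpr (Nat.pow_pos hq0)),
          Finset.card_range]
      -- the key one-scale step
      have hstep : ∀ d : ℕ,
          ‖∑ u ∈ Finset.range (q^B), f (d * q^B + u)‖
            ≤ (q:ℝ)^B * (θ0 * P') := by
        intro d
        have e1 : (q:ℕ)^B = q^r * q^(Bb+1) := by
          rw [show B = r + (Bb+1) by omega, pow_add]
        have e2 : (q:ℕ)^(Bb+1) = q^m * q^A := by
          rw [show Bb + 1 = m + A by omega, pow_add]
        have e3 : (q:ℕ)^A = q^r * q^p := by
          rw [show A = r + p by omega, pow_add]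
        have split1 : ∑ u ∈ Finset.range (q^B), f (d * q^B + u)
            = ∑ g2 ∈ Finset.range (q^r), ∑ y ∈ Finset.range (q^(Bb+1)),
                f (d * q^B + (g2 * q^(Bb+1) + y)) := by
          conv_lhs => rw [show Finset.range (q^B) = Finset.range (q^r * q^(Bb+1)) by rw [← e1]]
          rw [sum_range_mul' (fun u => f (d * q^B + u))]
        have split3 : ∀ E : ℕ, ∑ y ∈ Finset.range (q^(Bb+1)), f (E + y)
            = ∑ v ∈ Finset.range (q^m), ∑ z ∈ Finset.range (q^A), f (E + (v * q^A + z)) := by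
          intro E
          conv_lhs => rw [show Finset.range (q^(Bb+1)) = Finset.range (q^m * q^A) by rw [← e2]]
          rw [sum_range_mul' (fun y => f (E + y))]
        have split4 : ∀ E : ℕ, ∑ z ∈ Finset.range (q^A), f (E + z)
            = ∑ g1 ∈ Finset.range (q^r), ∑ w ∈ Finset.range (q^p),
                f (E + (g1 * q^p + w)) := by
          intro E
          conv_lhs => rw [show Finset.range (q^A) = Finset.range (q^r * q^p) by rw [← e3]]
          rw [sum_range_mul' (fun z => f (E + z))]
        -- bound for nonzero g2
        have hg2 : ∀ g2 ∈ (Finset.range (q^r)).erase 0,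
            ‖∑ y ∈ Finset.range (q^(Bb+1)), f (d * q^B + (g2 * q^(Bb+1) + y))‖
              ≤ (q:ℝ)^(Bb+1) * P' := by
          intro g2 _
          have hid : ∀ y, d * q^B + (g2 * q^(Bb+1) + y) = (d * q^r + g2) * q^(Bb+1) + y := by
            intro y; rw [e1]; ring
          rw [Finset.sum_congr rfl (fun y _ => by rw [hid y])]
          exact hIH_B1 _
        -- main term for g1 = 0
        have hmain : ∀ v ∈ Finset.range (q^m),
            ∑ w ∈ Finset.range (q^p), f (d * q^B + (v * q^A + (0 * q^p + w)))
              = f (d * q^B) * f (v * q^A) * ∑ w ∈ Finset.range (q^p), f w := by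
          intro v hv
          have hdvd : q^(p+r) ∣ d * q^B + v * q^A := by
            rw [← hp]
            exact dvd_add ((pow_dvd_pow q (by omega : A ≤ B)).mul_left d) (dvd_mul_left _ _)
          have h1 : ∀ w ∈ Finset.range (q^p), f (d * q^B + (v * q^A + (0 * q^p + w)))
              = f (d * q^B + v * q^A) * f w := by
            intro w hw
            have harg : d * q^B + (v * q^A + (0 * q^p + w)) = (d * q^B + v * q^A) + w := by ring
            rw [harg, hqm p _ w (Finset.mem_range.mp hw) hdvd]
          have hlt : v * q^A < q^(Bb+1) := by
            rw [e2]
            exact (Nat.mul_lt_mul_right (Nat.pow_pos hq0)).mpr (Finset.mem_range.mp hv)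
          have hdvd2 : q^((Bb+1)+r) ∣ d * q^B := by
            rw [show (Bb+1)+r = B by omega]
            exact dvd_mul_left _ _
          have h2 : f (d * q^B + v * q^A) = f (d * q^B) * f (v * q^A) :=
            hqm (Bb+1) _ _ hlt hdvd2
          rw [Finset.sum_congr rfl h1, ← Finset.mul_sum, h2]
        -- nonzero g1 bound
        have hg1 : ∀ v ∈ Finset.range (q^m), ∀ g1 ∈ (Finset.range (q^r)).erase 0,
            ‖∑ w ∈ Finset.range (q^p), f (d * q^B + (v * q^A + (g1 * q^p + w)))‖
              ≤ (q:ℝ)^p * P' := by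
          intro v _ g1 _
          have e4 : (q:ℕ)^B = q^(m+2*r) * q^p := by rw [show B = (m+2*r)+p by omega, pow_add]
          have hid : ∀ w, d * q^B + (v * q^A + (g1 * q^p + w))
              = (d * q^(m+2*r) + v * q^r + g1) * q^p + w := by
            intro w; rw [e4, e3]; ring
          rw [Finset.sum_congr rfl (fun w _ => by rw [hid w])]
          exact hIH_p _
        have h0r : (0:ℕ) ∈ Finset.range (q^r) := Finset.mem_range.mpr (Nat.pow_pos hq0)
        -- decompose F0
        have split34 : ∑ y ∈ Finset.range (q^(Bb+1)), f (d * q^B + (0 * q^(Bb+1) + y))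
            = (∑ v ∈ Finset.range (q^m), ∑ g1 ∈ Finset.range (q^r),
                ∑ w ∈ Finset.range (q^p), f (d * q^B + (v * q^A + (g1 * q^p + w)))) := by
          have h00 : ∀ y, d * q^B + (0 * q^(Bb+1) + y) = d * q^B + y := by intro y; ring
          rw [Finset.sum_congr rfl (fun y _ => by rw [h00 y]), split3 (d * q^B)]
          refine Finset.sum_congr rfl (fun v _ => ?_)
          have hasc : ∀ z, d * q^B + (v * q^A + z) = (d * q^B + v * q^A) + z := by
            intro z; ring
          rw [Finset.sum_congr rfl (fun z _ => by rw [hasc z]), split4 (d * q^B + v * q^A)]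
          refine Finset.sum_congr rfl (fun g1 _ => Finset.sum_congr rfl (fun w _ => ?_))
          congr 1
          ring
        have habs_int : ‖∑ v ∈ Finset.range (q^m), f (v * q^A)‖
            = (q:ℝ)^m * Ahat := by
          have h := abs_sum_interval q hq f A Bb hiAB
          rw [show Bb + 1 - A = m from rfl] at h
          exact h
        -- decompose inner sums: per v
        have hvsplit : ∀ v ∈ Finset.range (q^m),
            ∑ g1 ∈ Finset.range (q^r), ∑ w ∈ Finset.range (q^p),
              f (d * q^B + (v * q^A + (g1 * q^p + w)))
            = f (d * q^B) * f (v * q^A) * (∑ w ∈ Finset.range (q^p), f w)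
              + ∑ g1 ∈ (Finset.range (q^r)).erase 0, ∑ w ∈ Finset.range (q^p),
                  f (d * q^B + (v * q^A + (g1 * q^p + w))) := by
          intro v hv
          rw [← Finset.add_sum_erase _ _ h0r, hmain v hv]
        have hrest_bound : ‖∑ v ∈ Finset.range (q^m),
              ∑ g1 ∈ (Finset.range (q^r)).erase 0, ∑ w ∈ Finset.range (q^p),
                f (d * q^B + (v * q^A + (g1 * q^p + w)))‖
            ≤ (q:ℝ)^m * (((q^r - 1 : ℕ):ℝ) * ((q:ℝ)^p * P')) := by
          calc ‖∑ v ∈ Finset.range (q^m), ∑ g1 ∈ (Finset.range (q^r)).erase 0,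
                  ∑ w ∈ Finset.range (q^p), f (d * q^B + (v * q^A + (g1 * q^p + w)))‖
              ≤ ∑ v ∈ Finset.range (q^m), ‖∑ g1 ∈ (Finset.range (q^r)).erase 0,
                  ∑ w ∈ Finset.range (q^p), f (d * q^B + (v * q^A + (g1 * q^p + w)))‖ :=
                norm_sum_le _ _
            _ ≤ ∑ v ∈ Finset.range (q^m), (((q^r - 1 : ℕ):ℝ) * ((q:ℝ)^p * P')) := by
                refine Finset.sum_le_sum (fun v hv => ?_)
                calc ‖∑ g1 ∈ (Finset.range (q^r)).erase 0,
                        ∑ w ∈ Finset.range (q^p), f (d * q^B + (v * q^A + (g1 * q^p + w)))‖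
                    ≤ ∑ g1 ∈ (Finset.range (q^r)).erase 0, ‖∑ w ∈ Finset.range (q^p), f (d * q^B + (v * q^A + (g1 * q^p + w)))‖ :=
                      norm_sum_le _ _
                  _ ≤ ((Finset.range (q^r)).erase 0).card • ((q:ℝ)^p * P') :=
                      Finset.sum_le_card_nsmul _ _ _ (fun g1 hg => hg1 v hv g1 hg)
                  _ = (((q^r - 1 : ℕ):ℝ) * ((q:ℝ)^p * P')) := by
                      rw [hcnt, nsmul_eq_mul]
            _ = (q:ℝ)^m * (((q^r - 1 : ℕ):ℝ) * ((q:ℝ)^p * P')) := by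
                rw [Finset.sum_const, Finset.card_range, nsmul_eq_mul]
                push_cast
                ring
        have hmain_bound : ‖∑ v ∈ Finset.range (q^m),
              f (d * q^B) * f (v * q^A) * (∑ w ∈ Finset.range (q^p), f w)‖
            ≤ (q:ℝ)^m * Ahat * ((q:ℝ)^p * P') := by
          have hfac : ∑ v ∈ Finset.range (q^m),
              f (d * q^B) * f (v * q^A) * (∑ w ∈ Finset.range (q^p), f w)
              = f (d * q^B) * (∑ v ∈ Finset.range (q^m), f (v * q^A))
                * (∑ w ∈ Finset.range (q^p), f w) := by
            rw [← Finset.sum_mul, ← Finset.mul_sum]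
          rw [hfac, norm_mul, norm_mul, huni, one_mul, habs_int]
          exact mul_le_mul_of_nonneg_left hW (by positivity)
        have hcast : ((q^r - 1 : ℕ):ℝ) = (q:ℝ)^r - 1 := by
          rw [Nat.cast_sub (Nat.one_le_pow r q hq0), Nat.cast_pow, Nat.cast_one]
        have hfinal : (q:ℝ)^m * Ahat * ((q:ℝ)^p * P')
              + (q:ℝ)^m * (((q^r - 1 : ℕ):ℝ) * ((q:ℝ)^p * P'))
              + ((q^r - 1 : ℕ):ℝ) * ((q:ℝ)^(Bb+1) * P')
            ≤ (q:ℝ)^B * (θ0 * P') := by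
          have hqR : (q:ℝ)^(Bb+1) = (q:ℝ)^m * (q:ℝ)^p * (q:ℝ)^r := by
            rw [show Bb+1 = m + p + r by omega, pow_add, pow_add]
          have hqB : (q:ℝ)^B = (q:ℝ)^m * (q:ℝ)^p * ((q:ℝ)^r * (q:ℝ)^r) := by
            rw [show B = m + p + (r + r) by omega, pow_add, pow_add, pow_add]
          have hq2r : (q:ℝ)^(2*r) = (q:ℝ)^r * (q:ℝ)^r := by
            rw [show 2*r = r + r by omega, pow_add]
          have hq3 : (0:ℝ) < (q:ℝ)^r := by positivity
          apply le_of_eq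
          rw [hcast, hqR, hqB, hθ0_def, hq2r]
          field_simp
          ring
        -- combine
        calc ‖∑ u ∈ Finset.range (q^B), f (d * q^B + u)‖
            = ‖(∑ y ∈ Finset.range (q^(Bb+1)), f (d * q^B + (0 * q^(Bb+1) + y)))
                + ∑ g2 ∈ (Finset.range (q^r)).erase 0, ∑ y ∈ Finset.range (q^(Bb+1)),
                    f (d * q^B + (g2 * q^(Bb+1) + y))‖ := by
              rw [split1, ← Finset.add_sum_erase _ _ h0r]
          _ ≤ ‖∑ y ∈ Finset.range (q^(Bb+1)), f (d * q^B + (0 * q^(Bb+1) + y))‖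
                + ‖∑ g2 ∈ (Finset.range (q^r)).erase 0,
                    ∑ y ∈ Finset.range (q^(Bb+1)), f (d * q^B + (g2 * q^(Bb+1) + y))‖ :=
              norm_add_le _ _
          _ ≤ (‖∑ v ∈ Finset.range (q^m),
                  f (d * q^B) * f (v * q^A) * (∑ w ∈ Finset.range (q^p), f w)‖
                + ‖∑ v ∈ Finset.range (q^m),
                    ∑ g1 ∈ (Finset.range (q^r)).erase 0, ∑ w ∈ Finset.range (q^p),
                      f (d * q^B + (v * q^A + (g1 * q^p + w)))‖)
                + ((q^r - 1 : ℕ):ℝ) * ((q:ℝ)^(Bb+1) * P') := by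
              gcongr ?_ + ?_
              · rw [split34, Finset.sum_congr rfl hvsplit, Finset.sum_add_distrib]
                exact norm_add_le _ _
              · calc ‖∑ g2 ∈ (Finset.range (q^r)).erase 0,
                      ∑ y ∈ Finset.range (q^(Bb+1)), f (d * q^B + (g2 * q^(Bb+1) + y))‖
                    ≤ ∑ g2 ∈ (Finset.range (q^r)).erase 0, ‖∑ y ∈ Finset.range (q^(Bb+1)), f (d * q^B + (g2 * q^(Bb+1) + y))‖ :=
                      norm_sum_le _ _
                  _ ≤ ((Finset.range (q^r)).erase 0).card • ((q:ℝ)^(Bb+1) * P') :=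
                      Finset.sum_le_card_nsmul _ _ _ hg2
                  _ = ((q^r - 1 : ℕ):ℝ) * ((q:ℝ)^(Bb+1) * P') := by
                      rw [hcnt, nsmul_eq_mul]
          _ ≤ ((q:ℝ)^m * Ahat * ((q:ℝ)^p * P')
                + (q:ℝ)^m * (((q^r - 1 : ℕ):ℝ) * ((q:ℝ)^p * P')))
                + ((q^r - 1 : ℕ):ℝ) * ((q:ℝ)^(Bb+1) * P') := by
              gcongr ?_ + _
              exact add_le_add hmain_bound hrest_bound
          _ ≤ (q:ℝ)^B * (θ0 * P') := by
              have := hfinal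
              linarith
      -- outer assembly
      have hqS : (q:ℕ)^(S-B) * q^B = q^S := by
        rw [← pow_add, show S - B + B = S by omega]
      calc ‖∑ v ∈ Finset.range (q^S), f (c * q^S + v)‖
          = ‖∑ t ∈ Finset.range (q^(S-B)), ∑ u ∈ Finset.range (q^B),
              f ((c * q^(S-B) + t) * q^B + u)‖ := by
            conv_lhs => rw [show Finset.range (q^S) = Finset.range (q^(S-B) * q^B)
              by rw [hqS]]
            rw [sum_range_mul' (fun v => f (c * q^S + v))]
            congr 1
            refine Finset.sum_congr rfl (fun t _ => Finset.sum_congr rfl (fun u _ => ?_))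
            congr 1
            rw [← hqS]
            ring
        _ ≤ ∑ t ∈ Finset.range (q^(S-B)), ‖∑ u ∈ Finset.range (q^B),
              f ((c * q^(S-B) + t) * q^B + u)‖ := norm_sum_le _ _
        _ ≤ ∑ t ∈ Finset.range (q^(S-B)), (q:ℝ)^B * (θ0 * P') :=
            Finset.sum_le_sum (fun t _ => hstep _)
        _ = (q:ℝ)^(S-B) * ((q:ℝ)^B * (θ0 * P')) := by
            rw [Finset.sum_const, Finset.card_range, nsmul_eq_mul]
            push_cast
            ring
        _ = (q:ℝ)^S * (θ0 * P') := by
            rw [← mul_assoc, ← pow_add, show S - B + B = S by omega]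
        _ = (q:ℝ)^S * ∏ i ∈ C,
              (1 - (1 - ‖avgD q f (Finset.Icc (a i) (b i))‖) / (q:ℝ)^(2*r)) := by
            rw [← Finset.mul_prod_erase C _ hi₀]

lemma lamBar_empty (q : ℕ) (hq : 2 ≤ q) (f : ℕ → ℂ) (hf0 : f 0 = 1) (a b : ℕ) (h : b < a) :
    lamBar q f (Finset.Icc a b) = 0 := by
  have hI : Finset.Icc a b = ∅ := Finset.Icc_eq_empty (by omega)
  have hdig : digitNums q (∅ : Finset ℕ) = {0} := by
    ext n
    rw [digitNums, Finset.mem_filter, Finset.mem_range, Finset.mem_singleton]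
    constructor
    · rintro ⟨hn, hres⟩
      have h0 : restrictSet q n ↑(∅ : Finset ℕ) = 0 := by
        simp [restrictSet]
      omega
    · rintro rfl
      refine ⟨Nat.pow_pos (by omega), ?_⟩
      simp [restrictSet]
  have havg : avgD q f (∅ : Finset ℕ) = 1 := by
    rw [avgD, hdig]
    simp [hf0]
  unfold lamBar lam
  rw [hI, havg]
  simp [Real.log_one]

lemma theta_le_exp (q r : ℕ) (hq : 2 ≤ q) (f : ℕ → ℂ) (huni : ∀ n, ‖f n‖ = 1)
    (I : Finset ℕ) :
    1 - (1 - ‖avgD q f I‖) / (q:ℝ)^(2*r)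
      ≤ Real.exp (-((1 - Real.exp (-1)) / (q:ℝ)^(2*r) * (lamBar q f I).toReal)) := by
  have hq2 : (0:ℝ) < (q:ℝ)^(2*r) := by positivity
  set x := (1 - ‖avgD q f I‖) / (q:ℝ)^(2*r) with hx
  have h1 : 1 - x ≤ Real.exp (-x) := by
    have := Real.add_one_le_exp (-x)
    linarith
  refine le_trans h1 (Real.exp_le_exp.mpr ?_)
  rw [neg_le_neg_iff]
  rw [hx, div_mul_eq_mul_div, div_le_div_iff₀ hq2 hq2]
  have := one_sub_ahat_ge q hq f huni I
  nlinarith [hq2.le]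

lemma greedy (r : ℕ) (a b : ℕ → ℕ)
    (hdisj : ∀ i j, i ≠ j → Disjoint (Finset.Icc (a i) (b i)) (Finset.Icc (a j) (b j)))
    (w : ℕ → ℝ) (hw0 : ∀ i, 0 ≤ w i) :
    ∀ F : Finset ℕ, (∀ i ∈ F, a i ≤ b i) →
    ∃ T, T ⊆ F ∧ (∀ i ∈ T, ∀ j ∈ T, i ≠ j →
        Disjoint (Finset.Icc (a i) (b i + 2*r)) (Finset.Icc (a j) (b j + 2*r))) ∧
      ∑ i ∈ F, w i ≤ (4*(r:ℝ)+1) * ∑ i ∈ T, w i := by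
  intro F
  induction F using Finset.strongInduction with
  | _ F IH =>
    intro hab
    rcases F.eq_empty_or_nonempty with hF | hF
    · refine ⟨∅, by simp [hF]⟩
    · obtain ⟨i₀, hi₀F, hmax⟩ := Finset.exists_max_image F w hF
      set J : ℕ → Finset ℕ := fun i => Finset.Icc (a i) (b i + 2*r) with hJ
      have hJne : a i₀ ∈ J i₀ := by
        rw [hJ]
        exact Finset.mem_Icc.mpr ⟨le_rfl, by have := hab i₀ hi₀F; omega⟩
      set F' := F.filter (fun j => Disjoint (J j) (J i₀)) with hF'
      have hi₀F' : i₀ ∉ F' := by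
        rw [hF', Finset.mem_filter]
        rintro ⟨-, hd⟩
        exact (Finset.not_disjoint_iff.mpr ⟨a i₀, hJne, hJne⟩) hd
      have hssub : F' ⊂ F :=
        ⟨Finset.filter_subset _ _, fun hsub => hi₀F' (hsub hi₀F)⟩
      obtain ⟨T, hTsub, hTdisj, hTsum⟩ :=
        IH F' hssub (fun i hi => hab i (Finset.filter_subset _ _ hi))
      have hi₀T : i₀ ∉ T := fun h => hi₀F' (hTsub h)
      refine ⟨insert i₀ T, ?_, ?_, ?_⟩
      · exact Finset.insert_subset hi₀F (hTsub.trans (Finset.filter_subset _ _))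
      · intro i hi j hj hij
        rcases Finset.mem_insert.mp hi with rfl | hiT
        · rcases Finset.mem_insert.mp hj with rfl | hjT
          · exact absurd rfl hij
          · have := (Finset.mem_filter.mp (hTsub hjT)).2
            exact this.symm
        · rcases Finset.mem_insert.mp hj with rfl | hjT
          · exact (Finset.mem_filter.mp (hTsub hiT)).2
          · exact hTdisj i hiT j hjT hij
      · -- sum bound
        set Rem := F.filter (fun j => ¬ Disjoint (J j) (J i₀)) with hRem
        have hi₀Rem : i₀ ∈ Rem := by
          rw [hRem, Finset.mem_filter]
          exact ⟨hi₀F, fun hd => (Finset.not_disjoint_iff.mpr ⟨a i₀, hJne, hJne⟩) hd⟩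
        -- counting: card of Rem.erase i₀ ≤ 4r
        have hcard : (Rem.erase i₀).card ≤ 4*r := by
          set key : ℕ → ℕ := fun j => if b i₀ < a j then a j else b j with hkey
          set T4 := (Finset.Ioc (b i₀) (b i₀ + 2*r)) ∪ (Finset.Ico (a i₀ - 2*r) (a i₀))
            with hT4
          have hT4card : T4.card ≤ 4*r := by
            calc T4.card ≤ (Finset.Ioc (b i₀) (b i₀ + 2*r)).card
                + (Finset.Ico (a i₀ - 2*r) (a i₀)).card := Finset.card_union_le _ _
              _ ≤ 4*r := by
                  rw [Nat.card_Ioc, Nat.card_Ico]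
                  omega
          have hget : ∀ j ∈ Rem.erase i₀, j ∈ F ∧ j ≠ i₀ ∧
              ∃ x, a j ≤ x ∧ x ≤ b j + 2*r ∧ a i₀ ≤ x ∧ x ≤ b i₀ + 2*r := by
            intro j hj
            have hjne := Finset.ne_of_mem_erase hj
            have hjRem := Finset.mem_of_mem_erase hj
            rw [hRem, Finset.mem_filter] at hjRem
            obtain ⟨hjF, hnd⟩ := hjRem
            obtain ⟨x, hx1, hx2⟩ := Finset.not_disjoint_iff.mp hnd
            rw [hJ] at hx1 hx2
            simp only [Finset.mem_Icc] at hx1 hx2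
            exact ⟨hjF, hjne, x, hx1.1, hx1.2, hx2.1, hx2.2⟩
          have hsep : ∀ j ∈ Rem.erase i₀, b j < a i₀ ∨ b i₀ < a j := by
            intro j hj
            obtain ⟨hjF, hjne, -⟩ := hget j hj
            by_contra hcon
            push_neg at hcon
            obtain ⟨h1, h2⟩ := hcon
            have hd := hdisj j i₀ hjne
            have hm1 : max (a j) (a i₀) ∈ Finset.Icc (a j) (b j) :=
              Finset.mem_Icc.mpr ⟨le_max_left _ _, max_le (hab j hjF) h1⟩
            have hm2 : max (a j) (a i₀) ∈ Finset.Icc (a i₀) (b i₀) :=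
              Finset.mem_Icc.mpr ⟨le_max_right _ _, max_le h2 (hab i₀ hi₀F)⟩
            exact (Finset.disjoint_left.mp hd) hm1 hm2
          have hmaps : ∀ j ∈ Rem.erase i₀, key j ∈ T4 := by
            intro j hj
            obtain ⟨hjF, hjne, x, hx1, hx2, hx3, hx4⟩ := hget j hj
            rw [hkey, hT4]
            beta_reduce
            by_cases hc : b i₀ < a j
            · rw [if_pos hc]
              apply Finset.mem_union_left
              exact Finset.mem_Ioc.mpr ⟨hc, by omega⟩
            · rw [if_neg hc]
              apply Finset.mem_union_right
              push_neg at hc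
              have hbj : b j < a i₀ := by
                rcases hsep j hj with h | h
                · exact h
                · omega
              exact Finset.mem_Ico.mpr ⟨by omega, hbj⟩
          have hinj : Set.InjOn key (Rem.erase i₀ : Set ℕ) := by
            intro j hjmem j' hjmem' hkeq
            by_contra hne
            have hj := hget j (by exact_mod_cast hjmem)
            have hj' := hget j' (by exact_mod_cast hjmem')
            obtain ⟨hjF, -, -⟩ := hj
            obtain ⟨hjF', -, -⟩ := hj'
            have hd := hdisj j j' hne
            have hpoint : ∃ y, y ∈ Finset.Icc (a j) (b j) ∧ y ∈ Finset.Icc (a j') (b j') := by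
              rw [hkey] at hkeq
              beta_reduce at hkeq
              have hsj := hsep j (by exact_mod_cast hjmem)
              have hsj' := hsep j' (by exact_mod_cast hjmem')
              have habj := hab j hjF
              have habj' := hab j' hjF'
              by_cases h1 : b i₀ < a j
              · by_cases h2 : b i₀ < a j'
                · rw [if_pos h1, if_pos h2] at hkeq
                  exact ⟨a j, Finset.mem_Icc.mpr ⟨le_rfl, habj⟩,
                    Finset.mem_Icc.mpr ⟨by omega, by omega⟩⟩
                · rw [if_pos h1, if_neg h2] at hkeq
                  exact ⟨a j, Finset.mem_Icc.mpr ⟨le_rfl, habj⟩,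
                    Finset.mem_Icc.mpr ⟨by omega, by omega⟩⟩
              · by_cases h2 : b i₀ < a j'
                · rw [if_neg h1, if_pos h2] at hkeq
                  exact ⟨b j, Finset.mem_Icc.mpr ⟨habj, le_rfl⟩,
                    Finset.mem_Icc.mpr ⟨by omega, by omega⟩⟩
                · rw [if_neg h1, if_neg h2] at hkeq
                  exact ⟨b j, Finset.mem_Icc.mpr ⟨habj, le_rfl⟩,
                    Finset.mem_Icc.mpr ⟨by omega, by omega⟩⟩
            obtain ⟨y, hy1, hy2⟩ := hpoint
            exact (Finset.disjoint_left.mp hd) hy1 hy2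
          calc (Rem.erase i₀).card ≤ T4.card :=
              Finset.card_le_card_of_injOn key hmaps hinj
            _ ≤ 4*r := hT4card
        have hRemcard : (Rem.card : ℝ) ≤ 4*(r:ℝ)+1 := by
          have h1 : Rem.card ≤ (Rem.erase i₀).card + 1 := by
            rw [Finset.card_erase_of_mem hi₀Rem]
            omega
          have : Rem.card ≤ 4*r + 1 := by omega
          exact_mod_cast this
        have hRemsum : ∑ j ∈ Rem, w j ≤ (4*(r:ℝ)+1) * w i₀ := by
          calc ∑ j ∈ Rem, w j ≤ Rem.card • w i₀ :=
              Finset.sum_le_card_nsmul _ _ _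
                (fun j hj => hmax j (Finset.filter_subset _ _ hj))
            _ = (Rem.card : ℝ) * w i₀ := nsmul_eq_mul _ _
            _ ≤ (4*(r:ℝ)+1) * w i₀ := mul_le_mul_of_nonneg_right hRemcard (hw0 i₀)
        have hsplit : ∑ i ∈ F, w i = ∑ i ∈ F', w i + ∑ j ∈ Rem, w j := by
          rw [hF', hRem]
          exact (Finset.sum_filter_add_sum_filter_not F _ w).symm
        rw [Finset.sum_insert hi₀T, hsplit]
        have hT0 : 0 ≤ ∑ i ∈ T, w i := Finset.sum_nonneg (fun i _ => hw0 i)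
        calc ∑ i ∈ F', w i + ∑ j ∈ Rem, w j
            ≤ (4*(r:ℝ)+1) * ∑ i ∈ T, w i + (4*(r:ℝ)+1) * w i₀ := add_le_add hTsum hRemsum
          _ = (4*(r:ℝ)+1) * (w i₀ + ∑ i ∈ T, w i) := by ring

lemma theta_nonneg (q r : ℕ) (hq : 2 ≤ q) (f : ℕ → ℂ) (huni : ∀ n, ‖f n‖ = 1)
    (I : Finset ℕ) : 0 ≤ 1 - (1 - ‖avgD q f I‖) / (q:ℝ)^(2*r) := by
  have hq1 : (1:ℝ) ≤ (q:ℝ)^(2*r) := one_le_pow₀ (by exact_mod_cast (by omega : 1 ≤ q))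
  have h0 : 0 ≤ ‖avgD q f I‖ := norm_nonneg _
  have h1 : ‖avgD q f I‖ ≤ 1 := abs_avgD_le_one q hq f huni I
  have h2 : (1 - ‖avgD q f I‖) / (q:ℝ)^(2*r) ≤ 1 - ‖avgD q f I‖ :=
    div_le_self (by linarith) hq1
  linarith

/-- If `f` is `q`-quasimultiplicative with gap `≤ r`, unimodular, and there is a sequence of
pairwise disjoint intervals `I_i` with `Σ λ̄_f(I_i) = ∞`, then `E_{n < q^L} f(n) → 0`. -/
theorem stmt_11 (q r : ℕ) (hq : 2 ≤ q) (f : ℕ → ℂ)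
    (huni : ∀ n, ‖f n‖ = 1) (hf0 : f 0 = 1)
    (hqm : ∀ l n m : ℕ, m < q ^ l → q ^ (l + r) ∣ n → f (n + m) = f n * f m)
    (a b : ℕ → ℕ)
    (hdisj : ∀ i j, i ≠ j → Disjoint (Finset.Icc (a i) (b i)) (Finset.Icc (a j) (b j)))
    (hdiv : ∑' i : ℕ, lamBar q f (Finset.Icc (a i) (b i)) = ⊤) :
    Filter.Tendsto (fun L : ℕ => (∑ n ∈ Finset.range (q ^ L), f n) / ((q : ℂ) ^ L))
      Filter.atTop (nhds 0) := by
  have hq0 : 0 < q := by omega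
  set w : ℕ → ℝ := fun i => (lamBar q f (Finset.Icc (a i) (b i))).toReal with hw
  have hle1 : ∀ i, lamBar q f (Finset.Icc (a i) (b i)) ≤ 1 := fun i => min_le_right _ _
  have hne_top : ∀ i, lamBar q f (Finset.Icc (a i) (b i)) ≠ ⊤ :=
    fun i => ne_top_of_le_ne_top ENNReal.one_ne_top (hle1 i)
  have hw0 : ∀ i, 0 ≤ w i := fun i => ENNReal.toReal_nonneg
  have hw1 : ∀ i, w i ≤ 1 := by
    intro i
    rw [hw]
    calc (lamBar q f (Finset.Icc (a i) (b i))).toReal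
        ≤ (1 : ℝ≥0∞).toReal := ENNReal.toReal_mono ENNReal.one_ne_top (hle1 i)
      _ = 1 := ENNReal.toReal_one
  set κ := (1 - Real.exp (-1)) / (q:ℝ)^(2*r) with hκ
  have hκpos : 0 < κ := by
    rw [hκ]
    have h1 : Real.exp (-1) < 1 := by
      calc Real.exp (-1) < Real.exp 0 := Real.exp_lt_exp.mpr (by norm_num)
        _ = 1 := Real.exp_zero
    have h2 : (0:ℝ) < (q:ℝ)^(2*r) := by positivity
    exact div_pos (by linarith) h2
  rw [Metric.tendsto_atTop]
  intro ε hε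
  -- choose the weight target
  set M := (1 + |Real.log ε|) / κ with hM
  have hM0 : 0 ≤ M := by positivity
  have hexpM : Real.exp (-(κ * M)) < ε := by
    have hκM : κ * M = 1 + |Real.log ε| := by
      rw [hM]
      field_simp
    rw [hκM]
    have h1 : -(1 + |Real.log ε|) < Real.log ε := by
      have := neg_abs_le (Real.log ε)
      linarith
    calc Real.exp (-(1 + |Real.log ε|)) < Real.exp (Real.log ε) := Real.exp_lt_exp.mpr h1
      _ = ε := Real.exp_log hε
  set R := (4*(r:ℝ)+1) * M + r with hR
  have hR0 : 0 ≤ R := by positivity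
  -- extract a finite set with large weight
  obtain ⟨F, hF⟩ : ∃ F : Finset ℕ, ENNReal.ofReal R <
      ∑ i ∈ F, lamBar q f (Finset.Icc (a i) (b i)) := by
    rw [ENNReal.tsum_eq_iSup_sum] at hdiv
    have : ENNReal.ofReal R < ⨆ s : Finset ℕ, ∑ i ∈ s, lamBar q f (Finset.Icc (a i) (b i)) := by
      rw [hdiv]
      exact ENNReal.ofReal_lt_top
    exact lt_iSup_iff.mp this
  have hFsum_ne : (∑ i ∈ F, lamBar q f (Finset.Icc (a i) (b i))) ≠ ⊤ := by
    refine (ENNReal.sum_lt_top.mpr (fun i _ => ?_)).ne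
    exact lt_of_le_of_lt (hle1 i) ENNReal.one_lt_top
  have hFR : R < ∑ i ∈ F, w i := by
    have h1 : (ENNReal.ofReal R).toReal <
        (∑ i ∈ F, lamBar q f (Finset.Icc (a i) (b i))).toReal :=
      (ENNReal.toReal_lt_toReal ENNReal.ofReal_ne_top hFsum_ne).mpr hF
    rw [ENNReal.toReal_ofReal hR0, ENNReal.toReal_sum (fun i _ => hne_top i)] at h1
    exact h1
  -- filter to nonempty intervals
  set F1 := F.filter (fun i => a i ≤ b i) with hF1
  have hF1sum : ∑ i ∈ F1, w i = ∑ i ∈ F, w i := by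
    rw [hF1]
    rw [← Finset.sum_filter_add_sum_filter_not F (fun i => a i ≤ b i) w]
    have : ∑ i ∈ F.filter (fun i => ¬ a i ≤ b i), w i = 0 := by
      apply Finset.sum_eq_zero
      intro i hi
      have hlt : b i < a i := by
        have := (Finset.mem_filter.mp hi).2
        omega
      rw [hw]
      simp only
      rw [lamBar_empty q hq f hf0 (a i) (b i) hlt]
      simp
    rw [this, add_zero]
  -- filter to a i ≥ r
  set F2 := F1.filter (fun i => r ≤ a i) with hF2
  have hF2sum : ∑ i ∈ F1, w i ≤ ∑ i ∈ F2, w i + r := by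
    rw [hF2, ← Finset.sum_filter_add_sum_filter_not F1 (fun i => r ≤ a i) w]
    have hsmall : ∑ i ∈ F1.filter (fun i => ¬ r ≤ a i), w i ≤ (r:ℝ) := by
      have hcard : (F1.filter (fun i => ¬ r ≤ a i)).card ≤ r := by
        have hmaps : ∀ i ∈ F1.filter (fun i => ¬ r ≤ a i), a i ∈ Finset.range r := by
          intro i hi
          have := (Finset.mem_filter.mp hi).2
          exact Finset.mem_range.mpr (by omega)
        have hinj : Set.InjOn a ((F1.filter (fun i => ¬ r ≤ a i)) : Set ℕ) := by
          intro i hi j hj hij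
          by_contra hne
          have hiF1 : i ∈ F1 := Finset.mem_of_mem_filter _ (by exact_mod_cast hi)
          have hjF1 : j ∈ F1 := Finset.mem_of_mem_filter _ (by exact_mod_cast hj)
          have habi : a i ≤ b i := (Finset.mem_filter.mp hiF1).2
          have habj : a j ≤ b j := (Finset.mem_filter.mp hjF1).2
          have hd := hdisj i j hne
          exact (Finset.disjoint_left.mp hd)
            (Finset.mem_Icc.mpr ⟨le_rfl, habi⟩)
            (Finset.mem_Icc.mpr ⟨le_of_eq hij.symm, by omega⟩)
        calc (F1.filter (fun i => ¬ r ≤ a i)).card ≤ (Finset.range r).card :=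
            Finset.card_le_card_of_injOn a hmaps hinj
          _ = r := Finset.card_range r
      calc ∑ i ∈ F1.filter (fun i => ¬ r ≤ a i), w i
          ≤ (F1.filter (fun i => ¬ r ≤ a i)).card • (1:ℝ) :=
            Finset.sum_le_card_nsmul _ _ _ (fun i _ => hw1 i)
        _ = ((F1.filter (fun i => ¬ r ≤ a i)).card : ℝ) := by rw [nsmul_eq_mul, mul_one]
        _ ≤ (r:ℝ) := by exact_mod_cast hcard
    linarith
  -- greedy selection
  obtain ⟨T, hTsub, hTdisj, hTsum⟩ := greedy r a b hdisj w hw0 F2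
    (fun i hi => (Finset.mem_filter.mp (Finset.filter_subset _ _ hi)).2)
  have hTw : M < ∑ i ∈ T, w i := by
    have h4r : (0:ℝ) < 4*(r:ℝ)+1 := by positivity
    have : R < (4*(r:ℝ)+1) * ∑ i ∈ T, w i + r := by
      calc R < ∑ i ∈ F, w i := hFR
        _ = ∑ i ∈ F1, w i := hF1sum.symm
        _ ≤ ∑ i ∈ F2, w i + r := hF2sum
        _ ≤ (4*(r:ℝ)+1) * ∑ i ∈ T, w i + r := by linarith
    rw [hR] at this
    nlinarith
  -- properties of T
  have hTa : ∀ i ∈ T, r ≤ a i := fun i hi => (Finset.mem_filter.mp (hTsub hi)).2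
  have hTab : ∀ i ∈ T, a i ≤ b i := by
    intro i hi
    have : i ∈ F1 := Finset.filter_subset _ _ (hTsub hi)
    exact (Finset.mem_filter.mp this).2
  -- final bound
  refine ⟨T.sup (fun i => b i + 1 + r), fun L hL => ?_⟩
  have hscale : ∀ i ∈ T, b i + 1 + r ≤ L :=
    fun i hi => le_trans (Finset.le_sup (f := fun i => b i + 1 + r) hi) hL
  have hml := ML q r hq f huni hqm a b T hTa hTab hTdisj L hscale 0
  simp only [zero_mul, zero_add] at hml
  have hprod : ∏ i ∈ T, (1 - (1 - ‖avgD q f (Finset.Icc (a i) (b i))‖) / (q:ℝ)^(2*r))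
      ≤ Real.exp (-(κ * ∑ i ∈ T, w i)) := by
    calc ∏ i ∈ T, (1 - (1 - ‖avgD q f (Finset.Icc (a i) (b i))‖) / (q:ℝ)^(2*r))
        ≤ ∏ i ∈ T, Real.exp (-(κ * w i)) := by
          refine Finset.prod_le_prod (fun i _ => theta_nonneg q r hq f huni _) (fun i _ => ?_)
          exact theta_le_exp q r hq f huni _
      _ = Real.exp (∑ i ∈ T, -(κ * w i)) := (Real.exp_sum _ _).symm
      _ = Real.exp (-(κ * ∑ i ∈ T, w i)) := by
          congr 1
          rw [Finset.mul_sum, ← Finset.sum_neg_distrib]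
  have hexpmono : Real.exp (-(κ * ∑ i ∈ T, w i)) ≤ Real.exp (-(κ * M)) :=
    Real.exp_le_exp.mpr (by nlinarith [hTw, hκpos])
  have hqL : (0:ℝ) < (q:ℝ)^L := by positivity
  have habs : ‖∑ n ∈ Finset.range (q^L), f n‖ < (q:ℝ)^L * ε := by
    calc ‖∑ n ∈ Finset.range (q^L), f n‖
        ≤ (q:ℝ)^L * ∏ i ∈ T,
            (1 - (1 - ‖avgD q f (Finset.Icc (a i) (b i))‖) / (q:ℝ)^(2*r)) := hml
      _ ≤ (q:ℝ)^L * Real.exp (-(κ * ∑ i ∈ T, w i)) :=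
          mul_le_mul_of_nonneg_left hprod hqL.le
      _ ≤ (q:ℝ)^L * Real.exp (-(κ * M)) :=
          mul_le_mul_of_nonneg_left hexpmono hqL.le
      _ < (q:ℝ)^L * ε := by
          exact mul_lt_mul_of_pos_left hexpM hqL
  rw [dist_zero_right, norm_div, norm_pow, Complex.norm_natCast,
    div_lt_iff₀ hqL]
  calc ‖∑ n ∈ Finset.range (q^L), f n‖ < (q:ℝ)^L * ε := habs
    _ = ε * (q:ℝ)^L := by ring
end
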